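/- arXiv:1808.02669 — 5 statements merged into one kernel-verified Lean document; each statement's English description precedes it below -/
import Mathlib

section
/- Let a, b ∈ A and let q_a, q_b be quasinilpotent elements of A such that q_a commutes with a and q_b commutes with b. Then ϱ(a,b) = ϱ(a + q_a, b + q_b). -/
/-!
Write `T = C_{a,b}` and `H = C_{q_a,q_b}` as bounded operators on `A`, so that
`C_{a+q_a,b+q_b} = T + H`. The commutation hypotheses make `T` and `H` commute, and `H` is
quasinilpotent in the operator algebra, being the difference of the commuting quasinilpotent
operators of left multiplication by `q_a` and right multiplication by `q_b`. Expanding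
`(T + H)^n 1` binomially, the bounds `‖T^k 1‖ ≤ C (ϱ + ε)^k` and `‖H^j‖ ≤ D ε^j` give
`‖(T + H)^n 1‖ ≤ C D (ϱ + 2ε)^n`, whence `ϱ(a + q_a, b + q_b) ≤ ϱ(a, b)`. The reverse inequality
is the same statement for `T + H` and the commuting quasinilpotent `-H`.
-/

open Filter in
noncomputable def varrho {A : Type*} [NormedRing A] (a b : A) : ℝ :=
  atTop.limsup fun n : ℕ => ‖(fun x => a * x - x * b)^[n] 1‖ ^ ((n : ℝ)⁻¹)

open Filter Finset Topology

/-- Quasinilpotency in the metric form `‖x ^ n‖ ^ (1 / n) → 0`, which by Gelfand's formula is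
equivalent to `spectralRadius ℂ x = 0` in a complex Banach algebra but needs no completeness. -/
def IsQuasinilpotent {R : Type*} [NormedRing R] (x : R) : Prop :=
  ∀ ε > 0, ∃ C : ℝ, ∀ n : ℕ, ‖x ^ n‖ ≤ C * ε ^ n

section RealSequences

variable {s : ℕ → ℝ}

lemma exists_le_mul_pow_of_eventually_rpow_inv_le (hs : ∀ n, 0 ≤ s n) {ρ : ℝ} (hρ : 0 < ρ)
    (h : ∀ᶠ n in atTop, s n ^ (n : ℝ)⁻¹ ≤ ρ) : ∃ C : ℝ, ∀ n, s n ≤ C * ρ ^ n := by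
  have hev : ∀ᶠ n in atTop, s n / ρ ^ n ≤ 1 := by
    filter_upwards [h, eventually_ne_atTop 0] with n hn hn0
    rw [div_le_one (by positivity)]
    calc s n = (s n ^ (n : ℝ)⁻¹) ^ n := (Real.rpow_inv_natCast_pow (hs n) hn0).symm
      _ ≤ ρ ^ n := pow_le_pow_left₀ (Real.rpow_nonneg (hs n) _) hn n
  obtain ⟨C, hC⟩ := (isBoundedUnder_of_eventually_le hev).bddAbove_range
  refine ⟨C, fun n => ?_⟩
  have hn := hC (Set.mem_range_self n)
  rwa [div_le_iff₀ (by positivity)] at hn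

lemma eventually_rpow_inv_le_of_le_mul_pow (hs : ∀ n, 0 ≤ s n) {C ρ : ℝ} (hρ : 0 ≤ ρ)
    (h : ∀ n, s n ≤ C * ρ ^ n) :
    ∀ᶠ n in atTop, s n ^ (n : ℝ)⁻¹ ≤ max C 1 ^ (n : ℝ)⁻¹ * ρ := by
  filter_upwards [eventually_ne_atTop 0] with n hn
  calc s n ^ (n : ℝ)⁻¹ ≤ (max C 1 * ρ ^ n) ^ (n : ℝ)⁻¹ :=
        Real.rpow_le_rpow (hs n)
          ((h n).trans (mul_le_mul_of_nonneg_right (le_max_left _ _) (by positivity)))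
          (by positivity)
    _ = max C 1 ^ (n : ℝ)⁻¹ * ρ := by
        rw [Real.mul_rpow (by positivity) (by positivity), Real.pow_rpow_inv_natCast hρ hn]

lemma tendsto_rpow_inv_mul {M : ℝ} (hM : 0 < M) (ρ : ℝ) :
    Tendsto (fun n : ℕ => M ^ (n : ℝ)⁻¹ * ρ) atTop (𝓝 ρ) := by
  have hinv : Tendsto (fun n : ℕ => (n : ℝ)⁻¹) atTop (𝓝 0) :=
    tendsto_inv_atTop_zero.comp tendsto_natCast_atTop_atTop
  simpa using ((Real.continuousAt_const_rpow hM.ne').tendsto.comp hinv).mul_const ρ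

lemma isBoundedUnder_rpow_inv_of_le_mul_pow (hs : ∀ n, 0 ≤ s n) {C ρ : ℝ} (hρ : 0 ≤ ρ)
    (h : ∀ n, s n ≤ C * ρ ^ n) :
    IsBoundedUnder (· ≤ ·) atTop fun n : ℕ => s n ^ (n : ℝ)⁻¹ :=
  (tendsto_rpow_inv_mul (by positivity) ρ).isBoundedUnder_le.mono_le
    (eventually_rpow_inv_le_of_le_mul_pow hs hρ h)

lemma limsup_rpow_inv_le_of_le_mul_pow (hs : ∀ n, 0 ≤ s n) {C ρ : ℝ} (hρ : 0 ≤ ρ)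
    (h : ∀ n, s n ≤ C * ρ ^ n) :
    atTop.limsup (fun n : ℕ => s n ^ (n : ℝ)⁻¹) ≤ ρ := by
  have hlim := tendsto_rpow_inv_mul (lt_max_of_lt_right one_pos : (0 : ℝ) < max C 1) ρ
  calc atTop.limsup (fun n : ℕ => s n ^ (n : ℝ)⁻¹)
      ≤ atTop.limsup (fun n : ℕ => max C 1 ^ (n : ℝ)⁻¹ * ρ) :=
        limsup_le_limsup (eventually_rpow_inv_le_of_le_mul_pow hs hρ h)
          (isBoundedUnder_of ⟨0, fun n => Real.rpow_nonneg (hs n) _⟩).isCoboundedUnder_le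
          hlim.isBoundedUnder_le
    _ = ρ := hlim.limsup_eq

lemma sum_choose_mul_le_mul_add_pow {u v : ℕ → ℝ} {C D ρ ε : ℝ} (hu₀ : ∀ k, 0 ≤ u k)
    (hv₀ : ∀ j, 0 ≤ v j) (hu : ∀ k, u k ≤ C * ρ ^ k) (hv : ∀ j, v j ≤ D * ε ^ j) (n : ℕ) :
    ∑ k ∈ range (n + 1), n.choose k * (v (n - k) * u k) ≤ C * D * (ρ + ε) ^ n := by
  calc ∑ k ∈ range (n + 1), n.choose k * (v (n - k) * u k)
      ≤ ∑ k ∈ range (n + 1), n.choose k * (D * ε ^ (n - k) * (C * ρ ^ k)) := by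
        refine sum_le_sum fun k _ => mul_le_mul_of_nonneg_left ?_ (Nat.cast_nonneg _)
        exact mul_le_mul (hv _) (hu _) (hu₀ _) ((hv₀ _).trans (hv _))
    _ = C * D * (ρ + ε) ^ n := by
        rw [add_pow, mul_sum]
        exact sum_congr rfl fun k _ => by ring

end RealSequences

lemma Commute.add_pow_smul {R E : Type*} [Semiring R] [AddCommMonoid E] [Module R E] {T H : R}
    (h : Commute T H) (n : ℕ) (x : E) :
    (T + H) ^ n • x = ∑ k ∈ range (n + 1), n.choose k • H ^ (n - k) • T ^ k • x := by
  rw [h.add_pow, sum_smul]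
  refine sum_congr rfl fun k _ => ?_
  rw [(h.pow_pow k (n - k)).eq, ← Nat.cast_comm, mul_smul, mul_smul, Nat.cast_smul_eq_nsmul]

lemma Commute.norm_add_pow_smul_le {R E : Type*} [Semiring R] [SeminormedAddCommGroup E]
    [Module R E] {T H : R} (h : Commute T H) (n : ℕ) (x : E) :
    ‖(T + H) ^ n • x‖ ≤ ∑ k ∈ range (n + 1), n.choose k * ‖H ^ (n - k) • T ^ k • x‖ := by
  rw [h.add_pow_smul]
  exact (norm_sum_le _ _).trans (sum_le_sum fun k _ => norm_nsmul_le)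

namespace IsQuasinilpotent

variable {R : Type*} [NormedRing R]

lemma of_norm_pow_le {S : Type*} [NormedRing S] {x : R} {y : S} (hx : IsQuasinilpotent x)
    (h : ∀ n : ℕ, ‖y ^ n‖ ≤ ‖x ^ n‖) :
    IsQuasinilpotent y := fun ε hε =>
  (hx ε hε).imp fun _ hC n => (h n).trans (hC n)

lemma neg {x : R} (hx : IsQuasinilpotent x) : IsQuasinilpotent (-x) :=
  hx.of_norm_pow_le fun n => by
    rcases n.even_or_odd with hn | hn <;> simp [hn.neg_pow]

lemma _root_.Commute.isQuasinilpotent_add {x y : R} (h : Commute x y) (hx : IsQuasinilpotent x)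
    (hy : IsQuasinilpotent y) : IsQuasinilpotent (x + y) := by
  intro ε hε
  obtain ⟨C, hC⟩ := hx (ε / 2) (by positivity)
  obtain ⟨D, hD⟩ := hy (ε / 2) (by positivity)
  refine ⟨C * D, fun n => ?_⟩
  calc ‖(x + y) ^ n‖ = ‖(x + y) ^ n • (1 : R)‖ := by rw [smul_eq_mul, mul_one]
    _ ≤ ∑ k ∈ range (n + 1), n.choose k * ‖y ^ (n - k) • x ^ k • (1 : R)‖ :=
        h.norm_add_pow_smul_le n 1
    _ ≤ ∑ k ∈ range (n + 1), n.choose k * (‖y ^ (n - k)‖ * ‖x ^ k‖) := by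
        gcongr
        simpa only [smul_eq_mul, mul_one] using norm_mul_le _ _
    _ ≤ C * D * (ε / 2 + ε / 2) ^ n :=
        sum_choose_mul_le_mul_add_pow (fun _ => norm_nonneg _) (fun _ => norm_nonneg _) hC hD n
    _ = C * D * ε ^ n := by rw [add_halves]

lemma of_spectralRadius_eq_zero {A : Type*} [NormedRing A] [NormedAlgebra ℂ A] [CompleteSpace A]
    {q : A} (hq : spectralRadius ℂ q = 0) : IsQuasinilpotent q := by
  intro ε hε
  refine exists_le_mul_pow_of_eventually_rpow_inv_le (fun n => norm_nonneg _) hε ?_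
  have hlim := spectrum.pow_nnnorm_pow_one_div_tendsto_nhds_spectralRadius q
  rw [hq] at hlim
  filter_upwards [(ENNReal.tendsto_nhds_zero.mp hlim) (ENNReal.ofReal ε) (by simp [hε])] with n hn
  rw [← one_div, ← ENNReal.ofReal_le_ofReal_iff hε.le,
    ← ENNReal.ofReal_rpow_of_nonneg (norm_nonneg _) (by positivity), ofReal_norm]
  exact hn

end IsQuasinilpotent

namespace ContinuousLinearMap

section LocalSpectralRadius

variable {𝕜 E : Type*} [NontriviallyNormedField 𝕜] [NormedAddCommGroup E] [NormedSpace 𝕜 E]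

lemma norm_pow_apply_le (T : E →L[𝕜] E) (x : E) (n : ℕ) : ‖(T ^ n) x‖ ≤ ‖x‖ * ‖T‖ ^ n := by
  induction n with
  | zero => simp
  | succ n ih =>
    calc ‖(T ^ (n + 1)) x‖ = ‖T ((T ^ n) x)‖ := by rw [pow_succ']; rfl
      _ ≤ ‖T‖ * (‖x‖ * ‖T‖ ^ n) := (T.le_opNorm _).trans (by gcongr)
      _ = ‖x‖ * ‖T‖ ^ (n + 1) := by ring

lemma norm_add_pow_apply_le_mul_pow {T H : E →L[𝕜] E} (h : Commute T H) {x : E} {C D ρ ε : ℝ}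
    (hT : ∀ k, ‖(T ^ k) x‖ ≤ C * ρ ^ k) (hH : ∀ j, ‖H ^ j‖ ≤ D * ε ^ j) (n : ℕ) :
    ‖((T + H) ^ n) x‖ ≤ C * D * (ρ + ε) ^ n :=
  calc ‖((T + H) ^ n) x‖ ≤ ∑ k ∈ range (n + 1), n.choose k * ‖H ^ (n - k) • T ^ k • x‖ :=
        h.norm_add_pow_smul_le n x
    _ ≤ ∑ k ∈ range (n + 1), n.choose k * (‖H ^ (n - k)‖ * ‖(T ^ k) x‖) := by
        gcongr
        exact le_opNorm _ _
    _ ≤ C * D * (ρ + ε) ^ n :=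
        sum_choose_mul_le_mul_add_pow (fun _ => norm_nonneg _) (fun _ => norm_nonneg _) hT hH n

lemma limsup_norm_add_pow_apply_le {T H : E →L[𝕜] E} (h : Commute T H)
    (hH : IsQuasinilpotent H) (x : E) :
    atTop.limsup (fun n : ℕ => ‖((T + H) ^ n) x‖ ^ (n : ℝ)⁻¹) ≤
      atTop.limsup (fun n : ℕ => ‖(T ^ n) x‖ ^ (n : ℝ)⁻¹) := by
  set r := atTop.limsup (fun n : ℕ => ‖(T ^ n) x‖ ^ (n : ℝ)⁻¹)
  have hbdd := isBoundedUnder_rpow_inv_of_le_mul_pow (fun _ => norm_nonneg _) (norm_nonneg T)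
    (T.norm_pow_apply_le x)
  have hr : 0 ≤ r :=
    le_limsup_of_frequently_le (Frequently.of_forall fun _ => by positivity) hbdd
  refine le_of_forall_pos_le_add fun η hη => ?_
  obtain ⟨C, hC⟩ := exists_le_mul_pow_of_eventually_rpow_inv_le (fun _ => norm_nonneg _)
    (by positivity : 0 < r + η / 2)
    ((eventually_lt_of_limsup_lt (by linarith) hbdd).mono fun _ hn => hn.le)
  obtain ⟨D, hD⟩ := hH (η / 2) (by positivity)
  have hsum := norm_add_pow_apply_le_mul_pow h hC hD
  rw [add_assoc, add_halves] at hsum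
  exact limsup_rpow_inv_le_of_le_mul_pow (fun _ => norm_nonneg _) (by positivity) hsum

lemma limsup_norm_add_pow_apply_eq {T H : E →L[𝕜] E} (h : Commute T H)
    (hH : IsQuasinilpotent H) (x : E) :
    atTop.limsup (fun n : ℕ => ‖((T + H) ^ n) x‖ ^ (n : ℝ)⁻¹) =
      atTop.limsup (fun n : ℕ => ‖(T ^ n) x‖ ^ (n : ℝ)⁻¹) := by
  refine le_antisymm (limsup_norm_add_pow_apply_le h hH x) ?_
  simpa using limsup_norm_add_pow_apply_le (h.add_left (Commute.refl H)).neg_right hH.neg x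

end LocalSpectralRadius

section Multiplication

variable (𝕜 : Type*) {A : Type*} [NontriviallyNormedField 𝕜] [NormedRing A] [NormedAlgebra 𝕜 A]

lemma pow_mul_apply (a : A) (n : ℕ) : mul 𝕜 A a ^ n = mul 𝕜 A (a ^ n) := by
  induction n with
  | zero => ext; simp
  | succ n ih => ext; simp [pow_succ, ih, mul_assoc]

lemma pow_flip_mul_apply (b : A) (n : ℕ) : (mul 𝕜 A).flip b ^ n = (mul 𝕜 A).flip (b ^ n) := by
  induction n with
  | zero => ext; simp
  | succ n ih => ext; simp [pow_succ', ih, mul_assoc, pow_mul_comm']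

lemma opNorm_flip_mul_apply_le (b : A) : ‖(mul 𝕜 A).flip b‖ ≤ ‖b‖ :=
  opNorm_le_bound _ (norm_nonneg b) fun x => by simpa [mul_comm ‖b‖] using norm_mul_le x b

lemma commute_mul_flip_mul (a b : A) : Commute (mul 𝕜 A a) ((mul 𝕜 A).flip b) := by
  ext x
  simp [mul_assoc]

end Multiplication

end ContinuousLinearMap

section GeneralizedDerivation

open ContinuousLinearMap

variable (𝕜 : Type*) {A : Type*} [NontriviallyNormedField 𝕜] [NormedRing A] [NormedAlgebra 𝕜 A]

/-- The paper's `C_{a,b}`. -/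
noncomputable def genDerivation (a b : A) : A →L[𝕜] A :=
  mul 𝕜 A a - (mul 𝕜 A).flip b

lemma varrho_eq_limsup_genDerivation (a b : A) :
    varrho a b = atTop.limsup (fun n : ℕ => ‖(genDerivation 𝕜 a b ^ n) 1‖ ^ (n : ℝ)⁻¹) := by
  simp only [varrho, FunLike.coe_pow_eq_iterate]
  rfl

variable {𝕜}

@[simp]
lemma genDerivation_apply (a b x : A) : genDerivation 𝕜 a b x = a * x - x * b :=
  rfl

lemma genDerivation_add (a b a' b' : A) :
    genDerivation 𝕜 (a + a') (b + b') = genDerivation 𝕜 a b + genDerivation 𝕜 a' b' := by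
  ext x
  simp only [genDerivation_apply, add_apply, mul_add, add_mul]
  abel

lemma commute_genDerivation {a b a' b' : A} (ha : Commute a a') (hb : Commute b b') :
    Commute (genDerivation 𝕜 a b) (genDerivation 𝕜 a' b') := by
  ext x
  simp only [ContinuousLinearMap.mul_def, comp_apply, genDerivation_apply, mul_sub, sub_mul,
    ← mul_assoc, ha.eq]
  simp only [mul_assoc, hb.eq]
  abel

lemma isQuasinilpotent_genDerivation {a b : A} (ha : IsQuasinilpotent a)
    (hb : IsQuasinilpotent b) : IsQuasinilpotent (genDerivation 𝕜 a b) := by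
  rw [genDerivation, sub_eq_add_neg]
  refine (commute_mul_flip_mul 𝕜 a b).neg_right.isQuasinilpotent_add ?_ ?_
  · refine ha.of_norm_pow_le fun n => ?_
    rw [pow_mul_apply]
    exact opNorm_mul_apply_le 𝕜 A _
  · refine IsQuasinilpotent.neg (hb.of_norm_pow_le fun n => ?_)
    rw [pow_flip_mul_apply]
    exact opNorm_flip_mul_apply_le 𝕜 _

end GeneralizedDerivation

theorem stmt_2 {A : Type*} [NormedRing A] [NormedAlgebra ℂ A] [CompleteSpace A]
    (a b qa qb : A) (hqa : spectralRadius ℂ qa = 0) (hqb : spectralRadius ℂ qb = 0)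
    (hca : a * qa = qa * a) (hcb : b * qb = qb * b) :
    varrho a b = varrho (a + qa) (b + qb) := by
  have hH : IsQuasinilpotent (genDerivation ℂ qa qb) :=
    isQuasinilpotent_genDerivation (.of_spectralRadius_eq_zero hqa) (.of_spectralRadius_eq_zero hqb)
  rw [varrho_eq_limsup_genDerivation ℂ, varrho_eq_limsup_genDerivation ℂ, genDerivation_add]
  exact (ContinuousLinearMap.limsup_norm_add_pow_apply_eq (commute_genDerivation hca hcb) hH 1).symm
end

section
/- For a, b in a unital complex Banach algebra A, the A-valued entire function f(λ) = e^{λa} e^{-λb} has power series expansion f(λ) = ∑_{n=0}^∞ λ^n C_{a,b}^n(1) / n! valid for all λ ∈ ℂ. -/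
/-!
The map `x ↦ a * x - x * b` is `L_a - R_b`, where left multiplication `L_a` and right
multiplication `R_b` are commuting bounded operators on `A`. Hence
`exp (λ (L_a - R_b)) = exp (λ L_a) * exp (-λ R_b)`, and evaluating at `1` gives
`e^{λa} e^{-λb}`; evaluating the exponential series of `λ (L_a - R_b)` at `1` instead gives
the claimed series.
-/

open NormedSpace ContinuousLinearMap

namespace ContinuousLinearMap

variable {𝕜 E A : Type*} [RCLike 𝕜]

section Operator

variable [NormedAddCommGroup E] [NormedSpace 𝕜 E]

theorem iterate_smul_apply (T : E →L[𝕜] E) (c : 𝕜) (n : ℕ) (v : E) :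
    (c • T)^[n] v = c ^ n • T^[n] v := by
  induction n with
  | zero => simp
  | succ n ih =>
    rw [Function.iterate_succ_apply', ih, smul_apply, map_smul, smul_smul, pow_succ',
      Function.iterate_succ_apply']

variable [CompleteSpace E]

theorem hasSum_exp_apply (T : E →L[𝕜] E) (v : E) :
    HasSum (fun n : ℕ => (n.factorial : 𝕜)⁻¹ • T^[n] v) (exp T v) := by
  simpa only [apply_apply, smul_apply, FunLike.coe_pow_eq_iterate] using
    (apply 𝕜 E v).hasSum (exp_series_hasSum_exp' (𝕂 := 𝕜) T)

theorem exp_apply_eq_map_exp [NormedRing A] [NormedAlgebra 𝕜 A] [CompleteSpace A]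
    (T : E →L[𝕜] E) (v : E) (φ : A →L[𝕜] E) (x : A) (h : ∀ n, T^[n] v = φ (x ^ n)) :
    exp T v = φ (exp x) := by
  refine (hasSum_exp_apply T v).unique ?_
  simpa only [h, map_smul] using φ.hasSum (exp_series_hasSum_exp' (𝕂 := 𝕜) x)

end Operator

variable [NormedRing A] [NormedAlgebra 𝕜 A]

theorem commute_mul_mul_flip (x y : A) : Commute (mul 𝕜 A x) ((mul 𝕜 A).flip y) := by
  ext c
  simp [mul_assoc]

variable [CompleteSpace A]

theorem exp_mul_apply (x c : A) : exp (mul 𝕜 A x) c = exp x * c := by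
  refine exp_apply_eq_map_exp _ c ((mul 𝕜 A).flip c) x fun n => ?_
  induction n with
  | zero => simp
  | succ n ih => rw [Function.iterate_succ_apply', ih]; simp [pow_succ', mul_assoc]

theorem exp_mul_flip_apply_one (y : A) : exp ((mul 𝕜 A).flip y) 1 = exp y := by
  refine exp_apply_eq_map_exp _ 1 (.id 𝕜 A) y fun n => ?_
  induction n with
  | zero => simp
  | succ n ih => rw [Function.iterate_succ_apply', ih]; simp [pow_succ]

theorem exp_mul_sub_mul_flip_apply_one (x y : A) :
    exp (mul 𝕜 A x - (mul 𝕜 A).flip y) 1 = exp x * exp (-y) := by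
  have hrad : ∀ T : A →L[𝕜] A, T ∈ Metric.eball 0 (expSeries 𝕜 (A →L[𝕜] A)).radius :=
    fun T => (expSeries_radius_eq_top 𝕜 (A →L[𝕜] A)).symm ▸ edist_lt_top _ _
  rw [sub_eq_add_neg, exp_add_of_commute_of_mem_ball (commute_mul_mul_flip x y).neg_right
    (hrad _) (hrad _), mul_apply_eq_comp, ← map_neg, exp_mul_flip_apply_one, exp_mul_apply]

end ContinuousLinearMap

theorem stmt_3 {A : Type*} [NormedRing A] [NormedAlgebra ℂ A] [CompleteSpace A]
    (a b : A) (lam : ℂ) :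
    HasSum (fun n : ℕ => ((n.factorial : ℂ))⁻¹ • lam ^ n • ((fun x => a * x - x * b)^[n] 1))
      (NormedSpace.exp (lam • a) * NormedSpace.exp (-(lam • b))) := by
  set Δ : A →L[ℂ] A := mul ℂ A a - (mul ℂ A).flip b
  have hΔ : ⇑Δ = fun x => a * x - x * b := rfl
  have hlamΔ : lam • Δ = mul ℂ A (lam • a) - (mul ℂ A).flip (lam • b) := by
    simp only [Δ, smul_sub, map_smul]
  have key := hasSum_exp_apply (lam • Δ) 1
  rw [hlamΔ, exp_mul_sub_mul_flip_apply_one, ← hlamΔ] at key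
  simpa only [iterate_smul_apply, hΔ] using key
end

section
/- Suppose a = ∑_{i=1}^n λ_i p_i and b = ∑_{j=1}^k β_j q_j where {p_1,…,p_n} are mutually orthogonal nonzero idempotents summing to 1, and likewise {q_1,…,q_k}, with the λ_i distinct and the β_j distinct. Then ϱ(a,b) = sup { |λ_i - β_j| : p_i q_j ≠ 0 }. -/
open Filter Topology

section Algebra

variable {𝕜 R : Type*} [CommRing 𝕜] [Ring R] [Algebra 𝕜 R]

lemma OrthogonalIdempotents.mul_sum_smul {I : Type*} [Fintype I] {e : I → R}
    (he : OrthogonalIdempotents e) (c : I → 𝕜) (i : I) :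
    e i * ∑ j, c j • e j = c i • e i := by
  classical
  simp [Finset.mul_sum, he.mul_eq]

lemma OrthogonalIdempotents.sum_smul_mul {I : Type*} [Fintype I] {e : I → R}
    (he : OrthogonalIdempotents e) (c : I → 𝕜) (i : I) :
    (∑ j, c j • e j) * e i = c i • e i := by
  classical
  simp [Finset.sum_mul, he.mul_eq]

lemma mul_mul_sub_mul_mul {u v a b : R} {α β : 𝕜} (hu : u * a = α • u) (hv : b * v = β • v)
    (x : R) : u * (a * x - x * b) * v = (α - β) • (u * x * v) := by
  rw [mul_sub, sub_mul, ← mul_assoc u a, hu, ← mul_assoc u x b, mul_assoc (u * x) b v, hv,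
    smul_mul_assoc, smul_mul_assoc, mul_smul_comm, sub_smul]

lemma mul_iterate_mul_sub_mul_mul {u v a b : R} {α β : 𝕜} (hu : u * a = α • u)
    (hv : b * v = β • v) (m : ℕ) (x : R) :
    u * (fun y => a * y - y * b)^[m] x * v = (α - β) ^ m • (u * x * v) := by
  induction m generalizing x with
  | zero => simp
  | succ m ih =>
    rw [Function.iterate_succ_apply, ih, mul_mul_sub_mul_mul hu hv, smul_smul, pow_succ]

variable {I J : Type*} [Fintype I] [Fintype J] {p : I → R} {q : J → R}

lemma OrthogonalIdempotents.mul_iterate_mul_sub_mul_one_mul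
    (hp : OrthogonalIdempotents p) (hq : OrthogonalIdempotents q)
    (lam : I → 𝕜) (beta : J → 𝕜) (m : ℕ) (i : I) (j : J) :
    p i * (fun y => (∑ i, lam i • p i) * y - y * ∑ j, beta j • q j)^[m] 1 * q j =
      (lam i - beta j) ^ m • (p i * q j) := by
  rw [mul_iterate_mul_sub_mul_mul (hp.mul_sum_smul lam i) (hq.sum_smul_mul beta j), mul_one]

lemma CompleteOrthogonalIdempotents.iterate_mul_sub_mul_one
    (hp : CompleteOrthogonalIdempotents p) (hq : CompleteOrthogonalIdempotents q)
    (lam : I → 𝕜) (beta : J → 𝕜) (m : ℕ) :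
    (fun y => (∑ i, lam i • p i) * y - y * ∑ j, beta j • q j)^[m] 1 =
      ∑ i, ∑ j, (lam i - beta j) ^ m • (p i * q j) := by
  set x := (fun y => (∑ i, lam i • p i) * y - y * ∑ j, beta j • q j)^[m] 1
  calc x = (∑ i, p i) * x * ∑ j, q j := by rw [hp.complete, hq.complete, one_mul, mul_one]
    _ = ∑ i, ∑ j, p i * x * q j := by
      rw [Finset.sum_mul, Finset.sum_mul]
      simp only [Finset.mul_sum]
    _ = _ := by simp only [x, hp.mul_iterate_mul_sub_mul_one_mul hq.1]

end Algebra

section Norm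

variable {𝕜 A : Type*} [NormedField 𝕜] [NormedRing A] [NormedAlgebra 𝕜 A]
  {I J : Type*} [Fintype I] [Fintype J] {p : I → A} {q : J → A}

lemma CompleteOrthogonalIdempotents.norm_iterate_mul_sub_mul_one_le
    (hp : CompleteOrthogonalIdempotents p) (hq : CompleteOrthogonalIdempotents q)
    (lam : I → 𝕜) (beta : J → 𝕜) {M : ℝ} (hM : ∀ i j, p i * q j ≠ 0 → ‖lam i - beta j‖ ≤ M)
    (m : ℕ) :
    ‖(fun y => (∑ i, lam i • p i) * y - y * ∑ j, beta j • q j)^[m] 1‖ ≤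
      (∑ i, ∑ j, ‖p i * q j‖) * M ^ m := by
  rw [hp.iterate_mul_sub_mul_one hq, Finset.sum_mul]
  refine (norm_sum_le _ _).trans (Finset.sum_le_sum fun i _ => ?_)
  rw [Finset.sum_mul]
  refine (norm_sum_le _ _).trans (Finset.sum_le_sum fun j _ => ?_)
  rw [norm_smul, norm_pow, mul_comm]
  by_cases hij : p i * q j = 0
  · simp [hij]
  · gcongr
    exact hM i j hij

lemma OrthogonalIdempotents.le_norm_iterate_mul_sub_mul_one
    (hp : OrthogonalIdempotents p) (hq : OrthogonalIdempotents q)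
    (lam : I → 𝕜) (beta : J → 𝕜) (i : I) (j : J) (m : ℕ) :
    ‖p i * q j‖ / (‖p i‖ * ‖q j‖) * ‖lam i - beta j‖ ^ m ≤
      ‖(fun y => (∑ i, lam i • p i) * y - y * ∑ j, beta j • q j)^[m] 1‖ := by
  rw [div_mul_eq_mul_div]
  refine div_le_of_le_mul₀ (by positivity) (norm_nonneg _) ?_
  calc ‖p i * q j‖ * ‖lam i - beta j‖ ^ m
      = ‖p i * (fun y => (∑ i, lam i • p i) * y - y * ∑ j, beta j • q j)^[m] 1 * q j‖ := by
        rw [hp.mul_iterate_mul_sub_mul_one_mul hq, norm_smul, norm_pow, mul_comm]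
    _ ≤ _ := norm_mul₃_le.trans_eq (by ring)

end Norm

lemma varrho_of_subsingleton {A : Type*} [NormedRing A] [Subsingleton A] (a b : A) :
    varrho a b = 0 := by
  have h : ∀ᶠ m : ℕ in atTop, ‖(fun x => a * x - x * b)^[m] 1‖ ^ ((m : ℝ)⁻¹) = 0 := by
    filter_upwards [eventually_ne_atTop 0] with m hm
    simp [Subsingleton.elim _ (0 : A), hm]
  rw [varrho, limsup_congr h, limsup_const]

lemma tendsto_rpow_inv_of_le_of_le {u : ℕ → ℝ} {M c C : ℝ} (hM : 0 ≤ M) (hc : 0 < c)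
    (hlow : ∀ m, c * M ^ m ≤ u m) (hup : ∀ m, u m ≤ C * M ^ m) :
    Tendsto (fun m : ℕ => u m ^ (m : ℝ)⁻¹) atTop (𝓝 M) := by
  have hC : 0 < C := by simpa using hc.trans_le (by simpa using (hlow 0).trans (hup 0))
  have root : ∀ {d : ℝ}, 0 < d → ∀ {m : ℕ}, m ≠ 0 → (d * M ^ m) ^ (m : ℝ)⁻¹ = d ^ (m : ℝ)⁻¹ * M :=
    fun hd m hm => by rw [Real.mul_rpow hd.le (by positivity), Real.pow_rpow_inv_natCast hM hm]
  have lim : ∀ {d : ℝ}, 0 < d → Tendsto (fun m : ℕ => d ^ (m : ℝ)⁻¹ * M) atTop (𝓝 M) :=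
    fun hd => by
      simpa using (tendsto_const_nhds.rpow tendsto_inv_atTop_nhds_zero_nat
        (Or.inl hd.ne')).mul_const M
  refine tendsto_of_tendsto_of_tendsto_of_le_of_le' (lim hc) (lim hC) ?_ ?_
  · filter_upwards [eventually_ne_atTop 0] with m hm
    rw [← root hc hm]
    exact Real.rpow_le_rpow (by positivity) (hlow m) (by positivity)
  · filter_upwards [eventually_ne_atTop 0] with m hm
    rw [← root hC hm]
    exact Real.rpow_le_rpow ((mul_nonneg hc.le (pow_nonneg hM m)).trans (hlow m)) (hup m)
      (by positivity)

theorem stmt_9_general {A : Type*} [NormedRing A] [NormedAlgebra ℂ A]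
    (n k : ℕ) (lam : Fin n → ℂ) (beta : Fin k → ℂ)
    (p : Fin n → A) (q : Fin k → A)
    (hpidem : ∀ i, p i * p i = p i) (hqidem : ∀ j, q j * q j = q j)
    (hporth : ∀ i i', i ≠ i' → p i * p i' = 0)
    (hqorth : ∀ j j', j ≠ j' → q j * q j' = 0)
    (hpsum : ∑ i, p i = 1) (hqsum : ∑ j, q j = 1) :
    varrho (∑ i, lam i • p i) (∑ j, beta j • q j) =
      sSup {d : ℝ | ∃ i j, p i * q j ≠ 0 ∧ d = ‖lam i - beta j‖} := by
  set D := {d : ℝ | ∃ i j, p i * q j ≠ 0 ∧ d = ‖lam i - beta j‖}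
  have hp : CompleteOrthogonalIdempotents p := ⟨⟨hpidem, hporth⟩, hpsum⟩
  have hq : CompleteOrthogonalIdempotents q := ⟨⟨hqidem, hqorth⟩, hqsum⟩
  rcases subsingleton_or_nontrivial A with hA | hA
  · have hD : D = ∅ := Set.eq_empty_of_forall_notMem fun _ ⟨_, _, hij, _⟩ =>
      hij (Subsingleton.elim _ _)
    rw [hD, Real.sSup_empty, varrho_of_subsingleton]
  have hD_fin : D.Finite := (Set.finite_range fun ij : Fin n × Fin k =>
    ‖lam ij.1 - beta ij.2‖).subset (by rintro _ ⟨i, j, -, rfl⟩; exact ⟨(i, j), rfl⟩)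
  obtain ⟨i₀, j₀, h₀⟩ : ∃ i j, p i * q j ≠ 0 := by
    by_contra! h
    refine one_ne_zero (α := A) ?_
    calc (1 : A) = (∑ i, p i) * ∑ j, q j := by rw [hpsum, hqsum, one_mul]
      _ = 0 := by
        rw [Finset.sum_mul_sum]
        exact Finset.sum_eq_zero fun i _ => Finset.sum_eq_zero fun j _ => h i j
  obtain ⟨i, j, hij, hM⟩ := (show D.Nonempty from ⟨_, i₀, j₀, h₀, rfl⟩).csSup_mem hD_fin
  have hc : 0 < ‖p i * q j‖ / (‖p i‖ * ‖q j‖) := by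
    have := left_ne_zero_of_mul hij
    have := right_ne_zero_of_mul hij
    positivity
  refine (tendsto_rpow_inv_of_le_of_le (hM ▸ norm_nonneg _) hc
    (fun m => hM ▸ hp.1.le_norm_iterate_mul_sub_mul_one hq.1 lam beta i j m)
    (hp.norm_iterate_mul_sub_mul_one_le hq lam beta
      fun i j hij => le_csSup hD_fin.bddAbove ⟨i, j, hij, rfl⟩)).limsup_eq

theorem stmt_9 {A : Type*} [NormedRing A] [NormedAlgebra ℂ A] [CompleteSpace A]
    (n k : ℕ) (lam : Fin n → ℂ) (beta : Fin k → ℂ)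
    (hlam : Function.Injective lam) (hbeta : Function.Injective beta)
    (p : Fin n → A) (q : Fin k → A)
    (hp0 : ∀ i, p i ≠ 0) (hq0 : ∀ j, q j ≠ 0)
    (hpidem : ∀ i, p i * p i = p i) (hqidem : ∀ j, q j * q j = q j)
    (hporth : ∀ i i', i ≠ i' → p i * p i' = 0)
    (hqorth : ∀ j j', j ≠ j' → q j * q j' = 0)
    (hpsum : ∑ i, p i = 1) (hqsum : ∑ j, q j = 1) :
    varrho (∑ i, lam i • p i) (∑ j, beta j • q j) =
      sSup {d : ℝ | ∃ i j, p i * q j ≠ 0 ∧ d = ‖lam i - beta j‖} :=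
  stmt_9_general n k lam beta p q hpidem hqidem hporth hqorth hpsum hqsum
end

section
/- There exist a unital complex Banach algebra A and elements a, b ∈ A such that ϱ(a,b) ≠ ϱ(b,a); in particular, ϱ is not symmetric. Concretely, in the unital algebra generated by idempotents x_1, x_2 with x_1 x_2 = 0 and x_2 x_1 ≠ 0 (realizable as a four-dimensional subalgebra of the 3×3 complex matrices), the elements a = x_1/2 and b = -x_2/2 satisfy ϱ(a,b) = 1/2 and ϱ(b,a) = 1. -/
/-- The properties asked for: idempotents `x₁, x₂` with `x₁x₂ = 0 ≠ x₂x₁`, and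
`a = x₁/2`, `b = -x₂/2` (expressed as `a + a = x₁`, `b + b = -x₂`) with
`ϱ(a,b) = 1/2 ≠ 1 = ϱ(b,a)`. -/
def RhoAsymWitness (A : Type) [NormedRing A] : Prop :=
  ∃ x₁ x₂ a b : A,
    x₁ * x₁ = x₁ ∧ x₂ * x₂ = x₂ ∧ x₁ * x₂ = 0 ∧ x₂ * x₁ ≠ 0 ∧
    a + a = x₁ ∧ b + b = -x₂ ∧
    varrho a b = 1 / 2 ∧ varrho b a = 1 ∧ varrho a b ≠ varrho b a

/-!
Take `a = c p` and `b = -c q`, so that `C_{a,b}(x) = c (p x + x q)` and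
`C_{b,a}(x) = -c (q x + x p)`. For idempotents `p, q` the map `g x = q x + x p` fixes
`u = p + q - 2qp` and doubles `qp`; as `g 1 = u + 2qp`, this gives `gⁿ 1 = u + 2ⁿ qp`.
Exchanging `p` and `q` and using `pq = 0`, the other map sends `1` to `p + q` forever.
Hence `‖C_{a,b}ⁿ(1)‖ = |c|ⁿ ‖p + q‖`, whereas `‖C_{b,a}ⁿ(1)‖ = |c|ⁿ ‖u + 2ⁿ qp‖` is of
exact order `(2|c|)ⁿ` once `qp ≠ 0`.
-/

open Filter Topology

section Idempotents
variable {R : Type*} [Ring R] {p q : R}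

theorem iterate_mul_add_mul_one_of_isIdempotentElem (hp : IsIdempotentElem p)
    (hq : IsIdempotentElem q) (n : ℕ) :
    (fun x => q * x + x * p)^[n + 1] 1 = p + q - 2 • (q * p) + 2 ^ (n + 1) • (q * p) := by
  induction n with
  | zero => simp only [Function.iterate_one, mul_one, one_mul, zero_add, pow_one]; abel
  | succ n ih =>
    set u := p + q - 2 • (q * p)
    have hu : q * u + u * p = u := by
      have hqu : q * u = q * p + q - 2 • (q * p) := by
        simp only [u, mul_add, mul_sub, mul_smul_comm, ← mul_assoc, hq.eq]
      have hup : u * p = p + q * p - 2 • (q * p) := by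
        simp only [u, add_mul, sub_mul, smul_mul_assoc, mul_assoc, hp.eq]
      rw [hqu, hup]
      simp only [u]
      abel
    have hv : q * (q * p) + q * p * p = 2 • (q * p) := by
      rw [← mul_assoc, hq.eq, mul_assoc, hp.eq, two_nsmul]
    rw [Function.iterate_succ_apply', ih]
    simp only [mul_add, add_mul, mul_smul_comm, smul_mul_assoc]
    rw [add_add_add_comm, hu, ← smul_add, hv, smul_smul, ← pow_succ]

theorem add_ne_zero_of_mul_ne_zero (hp : IsIdempotentElem p) (hpq : p * q = 0) (hqp : q * p ≠ 0) :
    p + q ≠ 0 := by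
  intro h
  rw [eq_neg_of_add_eq_zero_right h, mul_neg, hp.eq, neg_eq_zero] at hpq
  simp [hpq] at hqp

end Idempotents

theorem tendsto_rpow_inv_natCast_of_le_of_le {f : ℕ → ℝ} {ρ C₁ C₂ : ℝ} (hρ : 0 ≤ ρ)
    (hC₁ : 0 < C₁) (hC₂ : 0 < C₂) (h₁ : ∀ᶠ n in atTop, C₁ * ρ ^ n ≤ f n)
    (h₂ : ∀ᶠ n in atTop, f n ≤ C₂ * ρ ^ n) :
    Tendsto (fun n : ℕ => f n ^ (n : ℝ)⁻¹) atTop (𝓝 ρ) := by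
  have hroot : ∀ C : ℝ, 0 < C →
      Tendsto (fun n : ℕ => (C * ρ ^ n) ^ (n : ℝ)⁻¹) atTop (𝓝 ρ) := by
    intro C hC
    have hC_root : Tendsto (fun n : ℕ => C ^ (n : ℝ)⁻¹) atTop (𝓝 1) := by
      simpa [Function.comp_def] using ((Real.continuousAt_const_rpow hC.ne').tendsto).comp
        (tendsto_inv_atTop_nhds_zero_nat (𝕜 := ℝ))
    refine (by simpa using hC_root.mul_const ρ : Tendsto _ _ (𝓝 ρ)).congr' ?_
    filter_upwards [eventually_ne_atTop 0] with n hn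
    rw [Real.mul_rpow hC.le (pow_nonneg hρ n), Real.pow_rpow_inv_natCast hρ hn]
  refine tendsto_of_tendsto_of_tendsto_of_le_of_le' (hroot C₁ hC₁) (hroot C₂ hC₂) ?_ ?_
  · filter_upwards [h₁] with n hn
    exact Real.rpow_le_rpow (by positivity) hn (by positivity)
  · filter_upwards [h₁, h₂] with n hn₁ hn₂
    exact Real.rpow_le_rpow ((by positivity : 0 ≤ C₁ * ρ ^ n).trans hn₁) hn₂ (by positivity)

section NormedAlgebra
variable {𝕜 A : Type*} [RCLike 𝕜] [NormedRing A] [NormedAlgebra 𝕜 A]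

theorem iterate_smul_mul_sub_mul_neg_smul (c : 𝕜) (p q : A) (n : ℕ) :
    (fun x => (c • p) * x - x * (-c • q))^[n] 1 = c ^ n • (fun x => p * x + x * q)^[n] 1 := by
  have hfactor : (fun x => (c • p) * x - x * (-c • q)) = (c • ·) ∘ fun x => p * x + x * q := by
    ext x
    simp only [Function.comp_apply, smul_add, smul_mul_assoc, mul_smul_comm, neg_smul,
      mul_neg, sub_neg_eq_add]
  have hcomm : Function.Commute (c • · : A → A) (fun x => p * x + x * q) := fun x => by
    simp only [smul_add, smul_mul_assoc, mul_smul_comm]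
  rw [hfactor, hcomm.comp_iterate, Function.comp_apply, smul_iterate_apply]

variable {p q : A}

theorem varrho_smul_neg_smul_of_isIdempotentElem (hp : IsIdempotentElem p)
    (hq : IsIdempotentElem q) (hpq : p * q = 0) (hqp : q * p ≠ 0) (c : 𝕜) :
    varrho (c • p) (-c • q) = ‖c‖ := by
  have hnorm : ∀ n : ℕ,
      ‖(fun x => (c • p) * x - x * (-c • q))^[n + 1] 1‖ = ‖p + q‖ * ‖c‖ ^ (n + 1) := by
    intro n
    rw [iterate_smul_mul_sub_mul_neg_smul, iterate_mul_add_mul_one_of_isIdempotentElem hq hp, hpq,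
      smul_zero, sub_zero, smul_zero, add_zero, add_comm q, norm_smul, norm_pow, mul_comm]
  have hpos : 0 < ‖p + q‖ := norm_pos_iff.2 (add_ne_zero_of_mul_ne_zero hp hpq hqp)
  have hev : ∀ᶠ n in atTop,
      ‖(fun x => (c • p) * x - x * (-c • q))^[n] 1‖ = ‖p + q‖ * ‖c‖ ^ n := by
    filter_upwards [eventually_gt_atTop 0] with n hn
    obtain ⟨m, rfl⟩ := Nat.exists_eq_add_one.2 hn
    exact hnorm m
  exact (tendsto_rpow_inv_natCast_of_le_of_le (norm_nonneg c) hpos hpos (hev.mono fun _ h => h.ge)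
    (hev.mono fun _ h => h.le)).limsup_eq

theorem varrho_neg_smul_smul_of_isIdempotentElem (hp : IsIdempotentElem p)
    (hq : IsIdempotentElem q) (hqp : q * p ≠ 0) (c : 𝕜) :
    varrho (-c • q) (c • p) = 2 * ‖c‖ := by
  set u := p + q - 2 • (q * p)
  have hnorm : ∀ n : ℕ, ‖(fun x => (-c • q) * x - x * (c • p))^[n + 1] 1‖
      = ‖c‖ ^ (n + 1) * ‖u + 2 ^ (n + 1) • (q * p)‖ := by
    intro n
    have hfactor := iterate_smul_mul_sub_mul_neg_smul (-c) q p (n + 1)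
    rw [neg_neg] at hfactor
    rw [hfactor, iterate_mul_add_mul_one_of_isIdempotentElem hp hq, norm_smul, norm_pow, norm_neg]
  have hv : 0 < ‖q * p‖ := norm_pos_iff.2 hqp
  have hsmul : ∀ n : ℕ, ‖2 ^ n • (q * p)‖ = 2 ^ n * ‖q * p‖ := fun n => by
    rw [RCLike.norm_nsmul 𝕜, nsmul_eq_mul, Nat.cast_pow, Nat.cast_ofNat]
  have hlarge : ∀ᶠ n : ℕ in atTop, 2 * ‖u‖ ≤ 2 ^ n * ‖q * p‖ := by
    filter_upwards [(tendsto_pow_atTop_atTop_of_one_lt one_lt_two).eventually_ge_atTop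
      (2 * ‖u‖ / ‖q * p‖)] with n hn
    rwa [div_le_iff₀ hv] at hn
  refine (tendsto_rpow_inv_natCast_of_le_of_le (C₁ := ‖q * p‖ / 2) (C₂ := ‖u‖ + ‖q * p‖)
    (by positivity) (by positivity) (by positivity) ?_ ?_).limsup_eq
  · filter_upwards [eventually_gt_atTop 0, hlarge] with n hn hn_large
    obtain ⟨m, rfl⟩ := Nat.exists_eq_add_one.2 hn
    have hlow : 2 ^ (m + 1) * ‖q * p‖ / 2 ≤ ‖u + 2 ^ (m + 1) • (q * p)‖ := by
      have := norm_sub_norm_le (2 ^ (m + 1) • (q * p)) (-u)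
      rw [hsmul, norm_neg, sub_neg_eq_add, add_comm _ u] at this
      linarith
    calc ‖q * p‖ / 2 * (2 * ‖c‖) ^ (m + 1)
        = ‖c‖ ^ (m + 1) * (2 ^ (m + 1) * ‖q * p‖ / 2) := by ring
      _ ≤ _ := by rw [hnorm]; gcongr
  · filter_upwards [eventually_gt_atTop 0] with n hn
    obtain ⟨m, rfl⟩ := Nat.exists_eq_add_one.2 hn
    have hup : ‖u + 2 ^ (m + 1) • (q * p)‖ ≤ 2 ^ (m + 1) * (‖u‖ + ‖q * p‖) := by
      calc ‖u + 2 ^ (m + 1) • (q * p)‖ ≤ ‖u‖ + 2 ^ (m + 1) * ‖q * p‖ := by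
            rw [← hsmul]; exact norm_add_le _ _
        _ ≤ 2 ^ (m + 1) * ‖u‖ + 2 ^ (m + 1) * ‖q * p‖ := by
            gcongr; exact le_mul_of_one_le_left (norm_nonneg u) (one_le_pow₀ one_le_two)
        _ = _ := by ring
    calc ‖(fun x => (-c • q) * x - x * (c • p))^[m + 1] 1‖
        ≤ ‖c‖ ^ (m + 1) * (2 ^ (m + 1) * (‖u‖ + ‖q * p‖)) := by rw [hnorm]; gcongr
      _ = (‖u‖ + ‖q * p‖) * (2 * ‖c‖) ^ (m + 1) := by ring

end NormedAlgebra

theorem rhoAsymWitness_of_isIdempotentElem (𝕜 : Type*) {A : Type} [RCLike 𝕜] [NormedRing A]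
    [NormedAlgebra 𝕜 A] {p q : A} (hp : IsIdempotentElem p) (hq : IsIdempotentElem q)
    (hpq : p * q = 0) (hqp : q * p ≠ 0) :
    RhoAsymWitness A := by
  have hhalf : ‖(2⁻¹ : 𝕜)‖ = 1 / 2 := by norm_num
  refine ⟨p, q, (2⁻¹ : 𝕜) • p, -(2⁻¹ : 𝕜) • q, hp.eq, hq.eq, hpq, hqp, ?_, ?_, ?_, ?_, ?_⟩
  · rw [← add_smul]; norm_num
  · rw [← add_smul]; norm_num
  · rw [varrho_smul_neg_smul_of_isIdempotentElem hp hq hpq hqp, hhalf]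
  · rw [varrho_neg_smul_smul_of_isIdempotentElem hp hq hqp, hhalf]; norm_num
  · rw [varrho_smul_neg_smul_of_isIdempotentElem hp hq hpq hqp,
      varrho_neg_smul_smul_of_isIdempotentElem hp hq hqp, hhalf]
    norm_num

theorem stmt_12 :
    ∃ (A : Type) (instR : NormedRing A)
      (_ : @NormedAlgebra ℂ A _ instR.toSeminormedRing)
      (_ : @CompleteSpace A instR.toMetricSpace.toUniformSpace),
      @RhoAsymWitness A instR := by
  let _ : NormedRing (Matrix (Fin 2) (Fin 2) ℂ) := Matrix.linftyOpNormedRing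
  let _ : NormedAlgebra ℂ (Matrix (Fin 2) (Fin 2) ℂ) := Matrix.linftyOpNormedAlgebra
  refine ⟨_, inferInstance, inferInstance, FiniteDimensional.complete ℂ _,
    rhoAsymWitness_of_isIdempotentElem ℂ (p := !![(1 : ℂ), 0; 0, 0]) (q := !![0, 0; 1, 1])
      ?_ ?_ ?_ fun h => by simpa using congrFun₂ h 1 0⟩
  all_goals ext i j; fin_cases i <;> fin_cases j <;> simp
end

section
/- Let x_1, x_2 be idempotents in a unital complex Banach algebra with x_1 x_2 = 0. Then for a = x_1/2 and b = -x_2/2, C_{a,b}^n(1) = (x_1 + x_2)/2^n for every n ≥ 1, while C_{b,a}^n(1) = (-1/2)^n [ x_2 + (∑_{j=1}^{n-1} (n choose j)) x_2 x_1 + x_1 ] for every n ≥ 1. -/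
lemma sumIoo_choose (n : ℕ) (hn : 1 ≤ n) :
    ∑ j ∈ Finset.Ioo 0 n, (n.choose j : ℂ) = 2 ^ n - 2 := by
  have hsub : ({0, n} : Finset ℕ) ⊆ Finset.range (n + 1) := by
    intro x hx
    simp only [Finset.mem_insert, Finset.mem_singleton] at hx
    rcases hx with rfl | rfl <;> simp [Finset.mem_range]
  have hset : Finset.Ioo 0 n = Finset.range (n + 1) \ {0, n} := by
    ext x
    simp only [Finset.mem_Ioo, Finset.mem_sdiff, Finset.mem_range, Finset.mem_insert,
      Finset.mem_singleton]
    omega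
  have htot : ∑ j ∈ Finset.range (n + 1), (n.choose j : ℂ) = 2 ^ n := by
    have := congrArg (Nat.cast : ℕ → ℂ) (Nat.sum_range_choose n)
    push_cast at this
    simpa using this
  have hpair : ∑ j ∈ ({0, n} : Finset ℕ), (n.choose j : ℂ) = 2 := by
    rw [Finset.sum_pair (by omega : (0:ℕ) ≠ n)]
    norm_num [Nat.choose_self]
  have key := Finset.sum_sdiff (f := fun j => (n.choose j : ℂ)) hsub
  rw [hpair, htot] at key
  rw [hset]
  linear_combination key

theorem stmt_13 {A : Type*} [NormedRing A] [NormedAlgebra ℂ A]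
    (x₁ x₂ a b : A)
    (h₁ : x₁ * x₁ = x₁) (h₂ : x₂ * x₂ = x₂) (h₁₂ : x₁ * x₂ = 0)
    (ha : a = (2 : ℂ)⁻¹ • x₁) (hb : b = -((2 : ℂ)⁻¹ • x₂)) :
    ∀ n : ℕ, 1 ≤ n →
      (fun x => a * x - x * b)^[n] 1 = ((2 : ℂ) ^ n)⁻¹ • (x₁ + x₂) ∧
      (fun x => b * x - x * a)^[n] 1 =
        (-(2 : ℂ)⁻¹) ^ n •
          (x₂ + (∑ j ∈ Finset.Ioo 0 n, (n.choose j : ℂ)) • (x₂ * x₁) + x₁) := by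
  subst ha hb
  have h₁' : ∀ z : A, z * x₁ * x₁ = z * x₁ := fun z => by rw [mul_assoc, h₁]
  have h₂' : ∀ z : A, z * x₂ * x₂ = z * x₂ := fun z => by rw [mul_assoc, h₂]
  have h₁₂' : ∀ z : A, z * x₁ * x₂ = 0 := fun z => by rw [mul_assoc, h₁₂, mul_zero]
  intro n hn
  induction n, hn using Nat.le_induction with
  | base =>
    have he : Finset.Ioo 0 1 = (∅ : Finset ℕ) := by decide
    constructor
    · simp only [Function.iterate_one]
      simp [mul_one, one_mul, pow_one, smul_add]
    · simp only [Function.iterate_one, he]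
      simp [mul_one, one_mul, pow_one]
      module
  | succ n hn ih =>
    obtain ⟨ih1, ih2⟩ := ih
    rw [sumIoo_choose n hn] at ih2
    rw [sumIoo_choose (n+1) (by omega)]
    constructor
    · rw [Function.iterate_succ_apply', ih1]
      simp only [mul_add, add_mul, mul_smul_comm, smul_mul_assoc, ← mul_assoc,
        h₁, h₂, h₁₂, h₁', h₂', h₁₂', zero_mul, mul_zero, smul_zero, neg_mul, mul_neg, smul_neg]
      module
    · rw [Function.iterate_succ_apply', ih2]
      simp only [mul_add, add_mul, mul_smul_comm, smul_mul_assoc, ← mul_assoc,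
        h₁, h₂, h₁₂, h₁', h₂', h₁₂', zero_mul, mul_zero, smul_zero, neg_mul, mul_neg, smul_neg]
      module
end
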